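/- Let (X, 𝒜, P) be a probability space, and let G : ℝ≥0 → X → ℕ ∪ {∞} be a family of measurable maps such that for every ω ∈ X the function t ↦ G(t)(ω) is nondecreasing and right-continuous (i.e. G(t)(ω) = inf_{s > t} G(s)(ω) for every t ≥ 0). Define the first failure time T(ω) = inf{t > 0 : G(t)(ω) > 0} ∈ [0, ∞] (with inf ∅ = ∞). Suppose H : ℝ≥0 → ℝ satisfies P({ω : G(t)(ω) = 0}) = exp(−H(t)) for every t ≥ 0. Then for every t > 0 one has P({ω : T(ω) ≤ t}) = 1 − exp(−H(t)). -/
import Mathlib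


open MeasureTheory Filter

theorem stmt0 {X : Type*} [MeasurableSpace X] (P : Measure X) [IsProbabilityMeasure P]
    (G : NNReal → X → ℕ∞)
    (hGmeas : ∀ t, Measurable (G t))
    (hmono : ∀ ω : X, Monotone (fun t => G t ω))
    (hrc : ∀ (ω : X) (t : NNReal), G t ω = ⨅ (s : NNReal) (_ : t < s), G s ω)
    (T : X → ENNReal)
    (hT : ∀ ω, T ω = ⨅ (t : NNReal) (_ : 0 < t ∧ 0 < G t ω), (t : ENNReal))
    (H : NNReal → ℝ)
    (hH : ∀ t : NNReal, P {ω | G t ω = 0} = ENNReal.ofReal (Real.exp (-H t)))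
    (t : NNReal) (ht : 0 < t) :
    P {ω | T ω ≤ (t : ENNReal)} = ENNReal.ofReal (1 - Real.exp (-H t)) := by
  have hset : {ω | T ω ≤ (t : ENNReal)} = {ω | G t ω = 0}ᶜ := by
    ext ω
    simp only [Set.mem_setOf_eq, Set.mem_compl_iff]
    constructor
    · intro hle h0
      -- show each G s ω for s > t is positive, then right continuity gives G t ω ≥ 1
      have hpos : ∀ s : NNReal, t < s → 0 < G s ω := by
        intro s hs
        have hlt : T ω < (s : ENNReal) := lt_of_le_of_lt hle (by exact_mod_cast hs)
        rw [hT] at hlt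
        simp only [iInf_lt_iff] at hlt
        obtain ⟨u, ⟨hu0, hupos⟩, hus⟩ := hlt
        exact lt_of_lt_of_le hupos (hmono ω (ENNReal.coe_lt_coe.mp hus).le)
      have : (1 : ℕ∞) ≤ G t ω := by
        rw [hrc ω t]
        refine le_iInf fun s => le_iInf fun hs => ?_
        exact Order.one_le_iff_pos.mpr (hpos s hs)
      simp [h0] at this
    · intro h0
      rw [hT]
      exact iInf₂_le t ⟨ht, pos_iff_ne_zero.mpr h0⟩
  have hms : MeasurableSet {ω | G t ω = 0} := hGmeas t (measurableSet_singleton 0)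
  rw [hset, measure_compl hms (measure_ne_top P _),
    hH, measure_univ, ENNReal.ofReal_sub _ (Real.exp_nonneg _), ENNReal.ofReal_one]
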